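/- Let ℓ ≥ 1 and r be natural numbers, B_ℓ the centered cardinal B-spline of order ℓ, c_0, …, c_r real coefficients, H > 0, and K_H(x) = (1/H) Σ_{γ=0}^{r} c_γ B_ℓ(x/H − (γ − r/2)). Then for every k ∈ ℝ with k ≠ 0, |∫_ℝ K_H(x) e^{−i k x} dx| ≤ (Σ_{γ=0}^{r} |c_γ|) · (2/(H|k|))^ℓ. -/

import Mathlib

open MeasureTheory

/-- The indicator function of `[-1/2, 1/2]`, i.e. the B-spline of order 1. -/
noncomputable def Bone : ℝ → ℝ :=
  Set.indicator (Set.Icc (-(1 / 2) : ℝ) (1 / 2)) (fun _ => 1)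

/-- `Bspline ℓ` is the centered cardinal B-spline of order `ℓ` (for `ℓ ≥ 1`):
the `ℓ`-fold convolution power of the indicator of `[-1/2, 1/2]`. -/
noncomputable def Bspline : ℕ → ℝ → ℝ
  | 0 => fun _ => 0
  | 1 => Bone
  | (n + 2) => fun x => ∫ y : ℝ, Bspline (n + 1) (x - y) * Bone y

lemma Bone_sm : StronglyMeasurable Bone :=
  (stronglyMeasurable_const.indicator measurableSet_Icc)

lemma Bone_int : Integrable Bone := by
  rw [Bone]
  exact (integrable_indicator_iff measurableSet_Icc).2
    (integrableOn_const measure_Icc_lt_top.ne)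

lemma Bspline_prop : ∀ ℓ : ℕ, StronglyMeasurable (Bspline ℓ) ∧ Integrable (Bspline ℓ) := by
  intro ℓ
  induction ℓ using Nat.twoStepInduction with
  | zero => exact ⟨stronglyMeasurable_const, by simp [Bspline]⟩
  | one => exact ⟨Bone_sm, Bone_int⟩
  | more n ih1 ih2 =>
    obtain ⟨hsm, hint⟩ := ih2
    have hprod : Integrable (fun p : ℝ × ℝ => Bone p.2 * Bspline (n+1) (p.1 - p.2))
        (volume.prod volume) :=
      Bone_int.convolution_integrand (ContinuousLinearMap.mul ℝ ℝ) hint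
    have hprod' : Integrable (fun p : ℝ × ℝ => Bspline (n+1) (p.1 - p.2) * Bone p.2)
        (volume.prod volume) := by
      simpa [mul_comm] using hprod
    constructor
    · show StronglyMeasurable fun x => ∫ y : ℝ, Bspline (n + 1) (x - y) * Bone y
      exact ((hsm.comp_measurable (measurable_fst.sub measurable_snd)).mul
        (Bone_sm.comp_measurable measurable_snd)).integral_prod_right'
    · show Integrable (fun x => ∫ y : ℝ, Bspline (n + 1) (x - y) * Bone y) volume
      exact hprod'.integral_prod_left

lemma Bspline_integrand_int (n : ℕ) (x : ℝ) :
    Integrable (fun y : ℝ => Bspline (n+1) (x - y) * Bone y) := by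
  have h1 : Integrable (fun y : ℝ => Bspline (n+1) (x - y)) :=
    (Bspline_prop (n+1)).2.comp_sub_left x
  have h2 := h1.bdd_mul Bone_sm.aestronglyMeasurable
    (c := 1) (ae_of_all _ fun y => by
      simp only [Bone, Set.indicator, Real.norm_eq_abs]
      split_ifs <;> norm_num)
  simpa [mul_comm] using h2

lemma abs_exp_ik (k x : ℝ) : ‖Complex.exp (-(Complex.I * k * x))‖ = 1 := by
  rw [Complex.norm_exp]
  simp [Complex.mul_re, Complex.mul_im]

lemma exp_ik_cont (k : ℝ) : Continuous fun x : ℝ => Complex.exp (-(Complex.I * k * x)) :=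
  Complex.continuous_exp.comp ((continuous_const.mul Complex.continuous_ofReal).neg)

lemma F1_bound (k : ℝ) (hk : k ≠ 0) :
    ‖∫ x : ℝ, ((Bone x : ℝ) : ℂ) * Complex.exp (-(Complex.I * k * x))‖ ≤ 2 / |k| := by
  have h1 : ∀ x : ℝ, ((Bone x : ℝ) : ℂ) * Complex.exp (-(Complex.I * k * x)) =
      Set.indicator (Set.Icc (-(1 / 2) : ℝ) (1 / 2))
        (fun x : ℝ => Complex.exp (-(Complex.I * k * x))) x := by
    intro x
    simp only [Bone, Set.indicator]
    split_ifs <;> simp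
  have hc : (-(Complex.I * k) : ℂ) ≠ 0 := by
    simp [Complex.ext_iff, hk]
  calc ‖∫ x : ℝ, ((Bone x : ℝ) : ℂ) * Complex.exp (-(Complex.I * k * x))‖
      = ‖∫ x in (-(1/2) : ℝ)..(1/2), Complex.exp ((-(Complex.I * k)) * x)‖ := by
        congr 1
        simp_rw [h1]
        rw [integral_indicator measurableSet_Icc, integral_Icc_eq_integral_Ioc,
          ← intervalIntegral.integral_of_le (by norm_num : (-(1/2) : ℝ) ≤ 1/2)]
        congr 1; ext x; ring_nf
    _ = ‖(Complex.exp ((-(Complex.I * k)) * (1/2 : ℝ))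
          - Complex.exp ((-(Complex.I * k)) * ((-(1/2) : ℝ) : ℝ))) / (-(Complex.I * k))‖ := by
        rw [integral_exp_mul_complex hc]
    _ ≤ 2 / |k| := by
        rw [norm_div]
        have hd : ‖-(Complex.I * k)‖ = |k| := by
          simp
        rw [hd]
        have e1 : ∀ a : ℝ, ‖Complex.exp ((-(Complex.I * k)) * a)‖ = 1 := by
          intro a
          rw [Complex.norm_exp]
          simp [Complex.mul_re, Complex.mul_im]
        have h2 : ‖Complex.exp ((-(Complex.I * k)) * (1/2 : ℝ))
            - Complex.exp ((-(Complex.I * k)) * ((-(1/2) : ℝ) : ℝ))‖ ≤ 2 := by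
          refine (norm_sub_le _ _).trans ?_
          rw [e1, e1]
          norm_num
        gcongr

lemma FB_bound (k : ℝ) (hk : k ≠ 0) : ∀ ℓ : ℕ,
    ‖∫ x : ℝ, ((Bspline ℓ x : ℝ) : ℂ) * Complex.exp (-(Complex.I * k * x))‖
      ≤ (2 / |k|) ^ ℓ := by
  intro ℓ
  induction ℓ using Nat.twoStepInduction with
  | zero => simp [Bspline]
  | one => simpa [Bspline] using F1_bound k hk
  | more n ih1 ih2 =>
    set e : ℝ → ℂ := fun x => Complex.exp (-(Complex.I * k * x)) with he
    set g : ℝ → ℂ := fun x => ((Bspline (n+1) x : ℝ) : ℂ) with hg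
    set b : ℝ → ℂ := fun x => ((Bone x : ℝ) : ℂ) with hb
    have hgm : AEStronglyMeasurable g volume :=
      Complex.continuous_ofReal.comp_aestronglyMeasurable
        (Bspline_prop (n+1)).1.aestronglyMeasurable
    have hgi : Integrable g := (Bspline_prop (n+1)).2.ofReal
    have hbi : Integrable b := Bone_int.ofReal
    have hP : Integrable (fun p : ℝ × ℝ => b p.2 * g (p.1 - p.2)) (volume.prod volume) :=
      hbi.convolution_integrand (ContinuousLinearMap.mul ℂ ℂ) hgi
    have hnorme : ∀ x : ℝ, ‖e x‖ = 1 := by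
      intro x
      rw [he]
      simp only []
      exact abs_exp_ik k x
    have hm : AEStronglyMeasurable (fun p : ℝ × ℝ => g (p.1 - p.2) * b p.2 * e p.1)
        (volume.prod volume) := by
      refine AEStronglyMeasurable.mul (AEStronglyMeasurable.mul ?_ ?_) ?_
      · exact Complex.continuous_ofReal.comp_aestronglyMeasurable
          ((Bspline_prop (n+1)).1.comp_measurable
            (measurable_fst.sub measurable_snd)).aestronglyMeasurable
      · exact Complex.continuous_ofReal.comp_aestronglyMeasurable
          (Bone_sm.comp_measurable measurable_snd).aestronglyMeasurable
      · exact ((exp_ik_cont k).comp continuous_fst).aestronglyMeasurable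
    have hInt : Integrable (Function.uncurry fun x y : ℝ => g (x - y) * b y * e x)
        (volume.prod volume) := by
      refine hP.norm.mono' hm ?_
      filter_upwards with p
      simp only [Function.uncurry]
      rw [norm_mul, norm_mul, hnorme, mul_one, norm_mul]
      exact le_of_eq (mul_comm _ _)
    have h0 : ∀ x : ℝ, ((Bspline (n+2) x : ℝ) : ℂ) * e x = ∫ y : ℝ, g (x - y) * b y * e x := by
      intro x
      calc ((Bspline (n+2) x : ℝ) : ℂ) * e x
          = (∫ y : ℝ, ((Bspline (n+1) (x - y) * Bone y : ℝ) : ℂ)) * e x := by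
            congr 1
            exact (Complex.ofRealCLM.integral_comp_comm (Bspline_integrand_int n x)).symm
        _ = ∫ y : ℝ, ((Bspline (n+1) (x - y) * Bone y : ℝ) : ℂ) * e x :=
            (integral_mul_const _ _).symm
        _ = ∫ y : ℝ, g (x - y) * b y * e x := by
            congr 1; funext y; rw [hg, hb]; push_cast; ring
    have key : (∫ x : ℝ, ((Bspline (n+2) x : ℝ) : ℂ) * e x)
        = (∫ x : ℝ, g x * e x) * (∫ y : ℝ, b y * e y) := by
      calc (∫ x : ℝ, ((Bspline (n+2) x : ℝ) : ℂ) * e x)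
          = ∫ x : ℝ, ∫ y : ℝ, g (x - y) * b y * e x := by simp_rw [h0]
        _ = ∫ y : ℝ, ∫ x : ℝ, g (x - y) * b y * e x := integral_integral_swap hInt
        _ = ∫ y : ℝ, (∫ x : ℝ, g x * e x) * (b y * e y) := by
            congr 1; funext y
            have hxy : ∀ x : ℝ, g (x - y) * b y * e x
                = (fun u : ℝ => g u * e u) (x - y) * (b y * e y) := by
              intro x
              have hsplit : e x = e (x - y) * e y := by
                rw [he]
                simp only []
                rw [← Complex.exp_add]
                congr 1
                push_cast
                ring
              rw [hsplit]
              simp only []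
              ring
            simp_rw [hxy]
            rw [integral_mul_const, integral_sub_right_eq_self (fun u : ℝ => g u * e u) y]
        _ = (∫ x : ℝ, g x * e x) * ∫ y : ℝ, b y * e y := integral_const_mul _ _
    rw [show ((2:ℝ) / |k|) ^ (n+2) = (2/|k|)^(n+1) * (2/|k|) from by ring]
    calc ‖∫ x : ℝ, ((Bspline (n+2) x : ℝ) : ℂ) * e x‖
        = ‖∫ x : ℝ, g x * e x‖ * ‖∫ y : ℝ, b y * e y‖ := by
          rw [key, norm_mul]
      _ ≤ (2/|k|)^(n+1) * (2/|k|) := by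
          refine mul_le_mul ih2 ?_ (norm_nonneg _) (by positivity)
          simpa [hb, he] using F1_bound k hk

lemma Bcomp_int (ℓ : ℕ) (s H : ℝ) (hH : 0 < H) :
    Integrable (fun x : ℝ => Bspline ℓ (x / H - s)) := by
  have h1 : Integrable (fun x : ℝ => Bspline ℓ (x - s)) := (Bspline_prop ℓ).2.comp_sub_right s
  have h2 : Integrable (fun x : ℝ => Bspline ℓ (x * H⁻¹ - s)) :=
    (integrable_comp_mul_right_iff (fun x : ℝ => Bspline ℓ (x - s)) (inv_ne_zero hH.ne')).2 h1
  simpa [div_eq_mul_inv] using h2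

lemma BcompC_int (ℓ : ℕ) (s H k : ℝ) (hH : 0 < H) :
    Integrable (fun x : ℝ =>
      ((Bspline ℓ (x / H - s) : ℝ) : ℂ) * Complex.exp (-(Complex.I * k * x))) := by
  refine (Bcomp_int ℓ s H hH).norm.mono' ?_ ?_
  · exact (Complex.continuous_ofReal.comp_aestronglyMeasurable
      ((Bspline_prop ℓ).1.comp_measurable (by fun_prop)).aestronglyMeasurable).mul
      (exp_ik_cont k).aestronglyMeasurable
  · filter_upwards with x
    rw [norm_mul, Complex.norm_real, abs_exp_ik, mul_one]

lemma G_bound (ℓ : ℕ) (s H k : ℝ) (hH : 0 < H) (hk : k ≠ 0) :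
    ‖∫ x : ℝ,
        ((Bspline ℓ (x / H - s) : ℝ) : ℂ) * Complex.exp (-(Complex.I * k * x))‖
      ≤ H * (2 / (H * |k|)) ^ ℓ := by
  set f : ℝ → ℂ :=
    fun x => ((Bspline ℓ (x / H - s) : ℝ) : ℂ) * Complex.exp (-(Complex.I * k * x)) with hf
  have hkH : k * H ≠ 0 := mul_ne_zero hk hH.ne'
  have h1 : (∫ x : ℝ, f (H * x)) = |H⁻¹| • ∫ x : ℝ, f x := Measure.integral_comp_mul_left f H
  have h2 : (∫ x : ℝ, f x) = H • ∫ x : ℝ, f (H * x) := by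
    rw [h1, smul_smul, abs_of_pos (inv_pos.2 hH), mul_inv_cancel₀ hH.ne', one_smul]
  have h3 : ∀ x : ℝ, f (H * x) =
      ((Bspline ℓ (x - s) : ℝ) : ℂ) * Complex.exp (-(Complex.I * ((k * H : ℝ) : ℂ) * x)) := by
    intro x
    rw [hf]
    simp only []
    rw [mul_div_cancel_left₀ _ hH.ne']
    congr 2
    push_cast
    ring
  have h4 : ∀ x : ℝ, ((Bspline ℓ (x - s) : ℝ) : ℂ) * Complex.exp (-(Complex.I * ((k * H : ℝ) : ℂ) * x))
      = ((fun u : ℝ => ((Bspline ℓ u : ℝ) : ℂ) * Complex.exp (-(Complex.I * ((k * H : ℝ) : ℂ) * u))) (x - s))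
        * Complex.exp (-(Complex.I * ((k * H : ℝ) : ℂ) * s)) := by
    intro x
    simp only []
    have hsplit : Complex.exp (-(Complex.I * ((k * H : ℝ) : ℂ) * x))
        = Complex.exp (-(Complex.I * ((k * H : ℝ) : ℂ) * ((x - s : ℝ) : ℂ)))
          * Complex.exp (-(Complex.I * ((k * H : ℝ) : ℂ) * s)) := by
      rw [← Complex.exp_add]
      congr 1
      push_cast
      ring
    rw [hsplit]
    ring
  have h5 : (∫ x : ℝ, f (H * x))
      = (∫ u : ℝ, ((Bspline ℓ u : ℝ) : ℂ) * Complex.exp (-(Complex.I * ((k * H : ℝ) : ℂ) * u)))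
        * Complex.exp (-(Complex.I * ((k * H : ℝ) : ℂ) * s)) := by
    simp_rw [h3, h4]
    rw [integral_mul_const,
      integral_sub_right_eq_self
        (fun u : ℝ => ((Bspline ℓ u : ℝ) : ℂ) * Complex.exp (-(Complex.I * ((k * H : ℝ) : ℂ) * u))) s]
  rw [h2, h5, norm_smul, norm_mul]
  rw [Real.norm_eq_abs, abs_of_pos hH]
  have hb1 := FB_bound (k * H) hkH ℓ
  have hb2 : ‖Complex.exp (-(Complex.I * ((k * H : ℝ) : ℂ) * s))‖ = 1 := by
    exact abs_exp_ik (k * H) s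
  rw [hb2, mul_one]
  have : |k * H| = H * |k| := by
    rw [abs_mul, abs_of_pos hH]; ring
  calc H * ‖∫ u : ℝ, ((Bspline ℓ u : ℝ) : ℂ) * Complex.exp (-(Complex.I * ((k * H : ℝ) : ℂ) * u))‖
      ≤ H * (2 / |k * H|) ^ ℓ := by gcongr
    _ = H * (2 / (H * |k|)) ^ ℓ := by rw [this]

theorem stmt_9 (ℓ r : ℕ) (hℓ : 1 ≤ ℓ) (c : ℕ → ℝ) (H : ℝ) (hH : 0 < H)
    (KH : ℝ → ℝ)
    (hKH : ∀ x : ℝ, KH x =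
      (1 / H) * ∑ γ ∈ Finset.range (r + 1), c γ * Bspline ℓ (x / H - ((γ : ℝ) - (r : ℝ) / 2))) :
    ∀ k : ℝ, k ≠ 0 →
      ‖∫ x : ℝ, ((KH x : ℝ) : ℂ) * Complex.exp (-(Complex.I * k * x))‖ ≤
        (∑ γ ∈ Finset.range (r + 1), |c γ|) * (2 / (H * |k|)) ^ ℓ := by
  intro k hk
  have hpt : ∀ x : ℝ, ((KH x : ℝ) : ℂ) * Complex.exp (-(Complex.I * k * x)) =
      ∑ γ ∈ Finset.range (r + 1), ((c γ / H : ℝ) : ℂ) *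
        (((Bspline ℓ (x / H - ((γ : ℝ) - (r : ℝ) / 2)) : ℝ) : ℂ)
          * Complex.exp (-(Complex.I * k * x))) := by
    intro x
    rw [hKH x]
    push_cast
    rw [Finset.mul_sum, Finset.sum_mul]
    refine Finset.sum_congr rfl fun γ _ => ?_
    push_cast
    ring
  calc ‖∫ x : ℝ, ((KH x : ℝ) : ℂ) * Complex.exp (-(Complex.I * k * x))‖
      = ‖∑ γ ∈ Finset.range (r + 1), ((c γ / H : ℝ) : ℂ) *
          ∫ x : ℝ, ((Bspline ℓ (x / H - ((γ : ℝ) - (r : ℝ) / 2)) : ℝ) : ℂ)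
            * Complex.exp (-(Complex.I * k * x))‖ := by
        congr 1
        simp_rw [hpt]
        rw [MeasureTheory.integral_finset_sum]
        · exact Finset.sum_congr rfl fun γ _ => integral_const_mul _ _
        · exact fun γ _ => (BcompC_int ℓ _ H k hH).const_mul _
    _ ≤ ∑ γ ∈ Finset.range (r + 1), ‖((c γ / H : ℝ) : ℂ) *
          ∫ x : ℝ, ((Bspline ℓ (x / H - ((γ : ℝ) - (r : ℝ) / 2)) : ℝ) : ℂ)
            * Complex.exp (-(Complex.I * k * x))‖ := norm_sum_le _ _
    _ ≤ ∑ γ ∈ Finset.range (r + 1), |c γ| * (2 / (H * |k|)) ^ ℓ := by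
        refine Finset.sum_le_sum fun γ _ => ?_
        rw [norm_mul, Complex.norm_real, Real.norm_eq_abs, abs_div, abs_of_pos hH]
        have hGb := G_bound ℓ ((γ : ℝ) - (r : ℝ) / 2) H k hH hk
        calc |c γ| / H * ‖∫ x : ℝ,
                ((Bspline ℓ (x / H - ((γ : ℝ) - (r : ℝ) / 2)) : ℝ) : ℂ)
                  * Complex.exp (-(Complex.I * k * x))‖
            ≤ |c γ| / H * (H * (2 / (H * |k|)) ^ ℓ) := by gcongr
          _ = |c γ| * (2 / (H * |k|)) ^ ℓ := by field_simp
    _ = (∑ γ ∈ Finset.range (r + 1), |c γ|) * (2 / (H * |k|)) ^ ℓ := by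
        rw [Finset.sum_mul]
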